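/- arXiv:2003.00546 — 3 statements merged into one kernel-verified Lean document; each statement's English description precedes it below -/
import Mathlib

section
/- Let H be a complex Hilbert space, (Hᵢ)_{i∈ℕ} a sequence of complex Hilbert spaces, and (Tᵢ : H → Hᵢ)_{i∈ℕ} a frame of operators for H with bounds r₁, r₂, with frame operator S. Assume S is invertible with bounded inverse S⁻¹. Then the operators Uᵢ := Tᵢ ∘ S⁻¹ : H → Hᵢ form a frame of operators for H with bounds 1/r₂ and 1/r₁: (1/r₂)‖x‖² ≤ Σ_{i∈ℕ} ‖Uᵢ x‖² ≤ (1/r₁)‖x‖² for all x ∈ H. -/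
/-!
Writing `S = ∑ Tᵢ† Tᵢ`, the frame inequalities say exactly that `r₁ ≤ S ≤ r₂` in the Loewner
order of the C⋆-algebra `H →L[ℂ] H`. Inversion is antitone on strictly positive elements, so
`r₂⁻¹ ≤ S⁻¹ ≤ r₁⁻¹`; and `S⁻¹ = (S⁻¹)† S S⁻¹` is the frame operator of `(Tᵢ S⁻¹)`, whose frame
inequalities are therefore the claimed ones.
-/

open scoped InnerProductSpace
open RCLike

lemma Ring.inverse_algebraMap {A : Type*} [Ring A] [Algebra ℝ A] (r : ℝ) :
    Ring.inverse (algebraMap ℝ A r) = algebraMap ℝ A r⁻¹ := by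
  rcases eq_or_ne r 0 with rfl | hr
  · simp
  · exact Ring.inverse_unit ((Units.mk0 r hr).map (algebraMap ℝ A).toMonoidHom)

namespace CStarAlgebra

variable {A : Type*} [CStarAlgebra A] [PartialOrder A] [StarOrderedRing A]

lemma algebraMap_inv_le_ringInverse {a : A} {r : ℝ} (ha : IsStrictlyPositive a)
    (h : a ≤ algebraMap ℝ A r) : algebraMap ℝ A r⁻¹ ≤ Ring.inverse a := by
  simpa [Ring.inverse_algebraMap] using ringInverse_le_ringInverse h ha

lemma ringInverse_le_algebraMap_inv {a : A} {r : ℝ} (hr : 0 < r)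
    (h : algebraMap ℝ A r ≤ a) : Ring.inverse a ≤ algebraMap ℝ A r⁻¹ := by
  simpa [Ring.inverse_algebraMap] using
    ringInverse_le_ringInverse h (isStrictlyPositive_algebraMap hr)

end CStarAlgebra

namespace ContinuousLinearMap

variable {𝕜 E : Type*} [RCLike 𝕜] [NormedAddCommGroup E] [InnerProductSpace 𝕜 E]
  [Algebra ℝ (E →L[𝕜] E)] [IsScalarTower ℝ 𝕜 (E →L[𝕜] E)]

lemma algebraMap_apply_eq_ofReal_smul (r : ℝ) (x : E) :
    algebraMap ℝ (E →L[𝕜] E) r x = (r : 𝕜) • x := by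
  rw [Algebra.algebraMap_eq_smul_one, ← algebraMap_smul 𝕜 r (1 : E →L[𝕜] E), smul_apply,
    one_apply_eq_self, RCLike.algebraMap_eq_ofReal]

lemma re_inner_algebraMap_apply_self (r : ℝ) (x : E) :
    re ⟪algebraMap ℝ (E →L[𝕜] E) r x, x⟫_𝕜 = r * ‖x‖ ^ 2 := by
  rw [algebraMap_apply_eq_ofReal_smul, inner_smul_left, conj_ofReal, re_ofReal_mul,
    inner_self_eq_norm_sq]

lemma isSymmetric_algebraMap (r : ℝ) :
    (algebraMap ℝ (E →L[𝕜] E) r : E →ₗ[𝕜] E).IsSymmetric := fun x y => by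
  simp only [coe_coe, algebraMap_apply_eq_ofReal_smul, inner_smul_left, inner_smul_right,
    conj_ofReal]

lemma algebraMap_le_iff {B : E →L[𝕜] E} (hB : (B : E →ₗ[𝕜] E).IsSymmetric) {r : ℝ} :
    algebraMap ℝ (E →L[𝕜] E) r ≤ B ↔ ∀ x, r * ‖x‖ ^ 2 ≤ re ⟪B x, x⟫_𝕜 := by
  simp only [le_def, isPositive_def, toLinearMap_sub, hB.sub (isSymmetric_algebraMap r), true_and,
    reApplyInnerSelf_apply, sub_apply, inner_sub_left, map_sub, sub_nonneg,
    re_inner_algebraMap_apply_self]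

lemma le_algebraMap_iff {B : E →L[𝕜] E} (hB : (B : E →ₗ[𝕜] E).IsSymmetric) {r : ℝ} :
    B ≤ algebraMap ℝ (E →L[𝕜] E) r ↔ ∀ x, re ⟪B x, x⟫_𝕜 ≤ r * ‖x‖ ^ 2 := by
  simp only [le_def, isPositive_def, toLinearMap_sub, (isSymmetric_algebraMap r).sub hB, true_and,
    reApplyInnerSelf_apply, sub_apply, inner_sub_left, map_sub, sub_nonneg,
    re_inner_algebraMap_apply_self]

end ContinuousLinearMap

section Frame

open ContinuousLinearMap ComplexConjugate

variable {𝕜 E ι : Type*} [RCLike 𝕜] [NormedAddCommGroup E] [InnerProductSpace 𝕜 E]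
  [CompleteSpace E] {F : ι → Type*} [∀ i, NormedAddCommGroup (F i)]
  [∀ i, InnerProductSpace 𝕜 (F i)] [∀ i, CompleteSpace (F i)]

def IsFrameOperator (T : ∀ i, E →L[𝕜] F i) (S : E →L[𝕜] E) : Prop :=
  ∀ x, HasSum (fun i => adjoint (T i) (T i x)) (S x)

namespace IsFrameOperator

variable {T : ∀ i, E →L[𝕜] F i} {S : E →L[𝕜] E}

lemma hasSum_inner (h : IsFrameOperator T S) (x y : E) :
    HasSum (fun i => ⟪T i x, T i y⟫_𝕜) ⟪x, S y⟫_𝕜 := by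
  simpa only [innerSL_apply_apply, adjoint_inner_right] using (h y).mapL (innerSL 𝕜 x)

lemma hasSum_norm_sq (h : IsFrameOperator T S) (x : E) :
    HasSum (fun i => ‖T i x‖ ^ 2) (re ⟪S x, x⟫_𝕜) := by
  simpa only [reCLM_apply, inner_self_eq_norm_sq, ← inner_re_symm] using
    (h.hasSum_inner x x).mapL reCLM

lemma isSymmetric (h : IsFrameOperator T S) : (S : E →ₗ[𝕜] E).IsSymmetric := fun x y =>
  calc ⟪S x, y⟫_𝕜 = conj ⟪y, S x⟫_𝕜 := (inner_conj_symm _ _).symm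
    _ = ⟪x, S y⟫_𝕜 := by
      refine ((h.hasSum_inner y x).map (starRingEnd 𝕜) continuous_conj).unique ?_
      simpa only [Function.comp_def, inner_conj_symm] using h.hasSum_inner x y

lemma algebraMap_le_iff [Algebra ℝ (E →L[𝕜] E)] [IsScalarTower ℝ 𝕜 (E →L[𝕜] E)]
    (h : IsFrameOperator T S) {r : ℝ} :
    algebraMap ℝ (E →L[𝕜] E) r ≤ S ↔ ∀ x, r * ‖x‖ ^ 2 ≤ ∑' i, ‖T i x‖ ^ 2 := by
  simp only [ContinuousLinearMap.algebraMap_le_iff h.isSymmetric, (h.hasSum_norm_sq _).tsum_eq]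

lemma le_algebraMap_iff [Algebra ℝ (E →L[𝕜] E)] [IsScalarTower ℝ 𝕜 (E →L[𝕜] E)]
    (h : IsFrameOperator T S) {r : ℝ} :
    S ≤ algebraMap ℝ (E →L[𝕜] E) r ↔ ∀ x, ∑' i, ‖T i x‖ ^ 2 ≤ r * ‖x‖ ^ 2 := by
  simp only [ContinuousLinearMap.le_algebraMap_iff h.isSymmetric, (h.hasSum_norm_sq _).tsum_eq]

lemma comp (h : IsFrameOperator T S) (A : E →L[𝕜] E) :
    IsFrameOperator (fun i => (T i).comp A) (adjoint A * S * A) := fun x => by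
  simpa only [adjoint_comp, comp_apply, mul_apply_eq_comp] using (h (A x)).mapL (adjoint A)

lemma ringInverse (h : IsFrameOperator T S) (hS : IsUnit S) :
    IsFrameOperator (fun i => (T i).comp (Ring.inverse S)) (Ring.inverse S) := by
  have hSinv : adjoint (Ring.inverse S) = Ring.inverse S :=
    (isSelfAdjoint_iff_isSymmetric.2 h.isSymmetric).ringInverse.adjoint_eq
  simpa only [hSinv, mul_assoc, Ring.mul_inverse_cancel S hS, mul_one] using
    h.comp (Ring.inverse S)

end IsFrameOperator

end Frame

theorem dual_frame_of_operators_general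
    {H : Type*} [NormedAddCommGroup H] [InnerProductSpace ℂ H] [CompleteSpace H]
    (G : ℕ → Type*) [∀ i, NormedAddCommGroup (G i)] [∀ i, InnerProductSpace ℂ (G i)]
    [∀ i, CompleteSpace (G i)]
    (T : ∀ i, H →L[ℂ] G i)
    (r₁ r₂ : ℝ) (hr₁ : 0 < r₁)
    (hframe : ∀ x : H,
        r₁ * ‖x‖ ^ 2 ≤ ∑' i, ‖T i x‖ ^ 2 ∧ ∑' i, ‖T i x‖ ^ 2 ≤ r₂ * ‖x‖ ^ 2)
    (S Sinv : H →L[ℂ] H)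
    (hS : ∀ x : H, HasSum (fun i => ContinuousLinearMap.adjoint (T i) (T i x)) (S x))
    (hSinv₁ : S.comp Sinv = 1) (hSinv₂ : Sinv.comp S = 1) :
    ∀ x : H,
      (1 / r₂) * ‖x‖ ^ 2 ≤ ∑' i, ‖(T i).comp Sinv x‖ ^ 2 ∧
        ∑' i, ‖(T i).comp Sinv x‖ ^ 2 ≤ (1 / r₁) * ‖x‖ ^ 2 := by
  have hT : IsFrameOperator T S := hS
  have hlow : algebraMap ℝ (H →L[ℂ] H) r₁ ≤ S := hT.algebraMap_le_iff.2 fun x => (hframe x).1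
  have hup : S ≤ algebraMap ℝ (H →L[ℂ] H) r₂ := hT.le_algebraMap_iff.2 fun x => (hframe x).2
  let u : (H →L[ℂ] H)ˣ := ⟨S, Sinv, hSinv₁, hSinv₂⟩
  have hSinv : Ring.inverse S = Sinv := Ring.inverse_unit u
  have hdual := hSinv ▸ hT.ringInverse u.isUnit
  have hinv_low := hSinv ▸ CStarAlgebra.algebraMap_inv_le_ringInverse
    ((isStrictlyPositive_algebraMap hr₁).of_le hlow) hup
  have hinv_up := hSinv ▸ CStarAlgebra.ringInverse_le_algebraMap_inv hr₁ hlow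
  intro x
  rw [one_div, one_div]
  exact ⟨hdual.algebraMap_le_iff.1 hinv_low x, hdual.le_algebraMap_iff.1 hinv_up x⟩

/-- If `(Tᵢ)` is a frame of operators with bounds `r₁, r₂` and frame operator `S` (with bounded
inverse `S⁻¹`), then `Uᵢ = Tᵢ ∘ S⁻¹` is a frame of operators with bounds `1/r₂` and `1/r₁`. -/
theorem dual_frame_of_operators
    {H : Type*} [NormedAddCommGroup H] [InnerProductSpace ℂ H] [CompleteSpace H]
    (G : ℕ → Type*) [∀ i, NormedAddCommGroup (G i)] [∀ i, InnerProductSpace ℂ (G i)]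
    [∀ i, CompleteSpace (G i)]
    (T : ∀ i, H →L[ℂ] G i)
    (r₁ r₂ : ℝ) (hr₁ : 0 < r₁) (hr₁₂ : r₁ ≤ r₂)
    (hframe : ∀ x : H,
        r₁ * ‖x‖ ^ 2 ≤ ∑' i, ‖T i x‖ ^ 2 ∧ ∑' i, ‖T i x‖ ^ 2 ≤ r₂ * ‖x‖ ^ 2)
    (S Sinv : H →L[ℂ] H)
    (hS : ∀ x : H, HasSum (fun i => ContinuousLinearMap.adjoint (T i) (T i x)) (S x))
    (hSinv₁ : S.comp Sinv = 1) (hSinv₂ : Sinv.comp S = 1) :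
    ∀ x : H,
      (1 / r₂) * ‖x‖ ^ 2 ≤ ∑' i, ‖(T i).comp Sinv x‖ ^ 2 ∧
        ∑' i, ‖(T i).comp Sinv x‖ ^ 2 ≤ (1 / r₁) * ‖x‖ ^ 2 :=
  dual_frame_of_operators_general G T r₁ r₂ hr₁ hframe S Sinv hS hSinv₁ hSinv₂
end

section
/- Let H be a complex Hilbert space, (Hᵢ)_{i∈ℕ} a sequence of complex Hilbert spaces, (Tᵢ : H → Hᵢ)_{i∈ℕ} a frame of operators for H with bounds r₁, r₂, and (Rᵢ : H → Hᵢ)_{i∈ℕ} a sequence of bounded linear operators. Suppose there exist constants λ, μ ≥ 0 with λ + μ/√r₁ < 1 such that for every finitely supported family (xᵢ)_{i∈ℕ} with xᵢ ∈ Hᵢ, ‖Σ_{i∈ℕ} (Tᵢ† − Rᵢ†)(xᵢ)‖ ≤ λ‖Σ_{i∈ℕ} Tᵢ†(xᵢ)‖ + μ(Σ_{i∈ℕ} ‖xᵢ‖²)^{1/2}. Then (Rᵢ) is a frame of operators for H with bounds r₁(1 − (λ + μ/√r₁))² and r₂(1 + (λ + μ/√r₂))². -/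
/-!
For the upper bound, the Bessel bound `r₂` of `(Tᵢ)` is dual to the bound `√r₂` of its synthesis
map `(yᵢ) ↦ ∑ Tᵢ† yᵢ` on finite families; the perturbation hypothesis transfers this to the
synthesis map of `(Rᵢ)` with constant `(1 + λ)√r₂ + μ`, and duality gives back a Bessel bound.

For the lower bound, the frame operator `S = ∑ Tᵢ† Tᵢ` is coercive, hence surjective, so every
`x` is `∑ Tᵢ† yᵢ` with `yᵢ = Tᵢ S⁻¹ x` and `r₁ ∑ ‖yᵢ‖² ≤ ‖x‖²`. Pairing `x` with this
representation and splitting `Tᵢ† = Rᵢ† + (Tᵢ† - Rᵢ†)` gives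
`‖x‖² ≤ λ‖x‖² + μ‖x‖²/√r₁ + ‖x‖ (∑ ‖Rᵢ x‖²)^{1/2} / √r₁`.
-/

open scoped InnerProductSpace
open ContinuousLinearMap (adjoint adjoint_inner_right)
open Finset Filter Topology RCLike

theorem ContinuousLinearMap.surjective_of_coercive {𝕜 : Type*} [RCLike 𝕜] {H : Type*}
    [NormedAddCommGroup H] [InnerProductSpace 𝕜 H] [CompleteSpace H] (S : H →L[𝕜] H) {c : ℝ}
    (hc : 0 < c) (hS : ∀ z, c * ‖z‖ ^ 2 ≤ re ⟪z, S z⟫_𝕜) : Function.Surjective S := by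
  have hbelow (z : H) : c * ‖z‖ ≤ ‖S z‖ := by
    have := (hS z).trans (re_inner_le_norm z (S z))
    rcases (norm_nonneg z).eq_or_lt with hz | hz
    · rw [← hz, mul_zero]; exact norm_nonneg _
    · nlinarith
  have hanti : AntilipschitzWith ⟨c⁻¹, by positivity⟩ S :=
    S.antilipschitz_of_bound fun z => by
      change ‖z‖ ≤ c⁻¹ * ‖S z‖
      rw [le_inv_mul_iff₀ hc]; exact hbelow z
  have hclosed : IsClosed (LinearMap.range (S : H →ₗ[𝕜] H) : Set H) :=
    hanti.isClosed_range S.uniformContinuous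
  have : CompleteSpace (LinearMap.range (S : H →ₗ[𝕜] H)) := hclosed.completeSpace_coe
  have hperp : (LinearMap.range (S : H →ₗ[𝕜] H))ᗮ = ⊥ := by
    refine (Submodule.eq_bot_iff _).mpr fun u hu => ?_
    have h0 : re ⟪u, S u⟫_𝕜 = 0 := by
      have h : ⟪S u, u⟫_𝕜 = 0 := (Submodule.mem_orthogonal _ u).mp hu (S u) ⟨u, rfl⟩
      rw [← inner_conj_symm, h, map_zero, map_zero]
    have hu2 : ‖u‖ ^ 2 ≤ 0 := nonpos_of_mul_nonpos_right (h0 ▸ hS u) hc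
    exact norm_eq_zero.mp ((sq_nonpos_iff ‖u‖).mp hu2)
  exact LinearMap.range_eq_top.mp (Submodule.orthogonal_eq_bot_iff.mp hperp)

section

variable {𝕜 : Type*} [RCLike 𝕜] {ι : Type*}
  {H : Type*} [NormedAddCommGroup H] [InnerProductSpace 𝕜 H]
  {G : ι → Type*} [∀ i, NormedAddCommGroup (G i)] [∀ i, InnerProductSpace 𝕜 (G i)]

def HasBesselBound (T : ∀ i, H →L[𝕜] G i) (B : ℝ) : Prop :=
  ∀ (x : H) (F : Finset ι), ∑ i ∈ F, ‖T i x‖ ^ 2 ≤ B * ‖x‖ ^ 2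

-- A lower bound on `∑'` excludes its junk value `0` on divergent series, unless `x = 0`.
theorem summable_norm_sq_of_lower_bound {T : ∀ i, H →L[𝕜] G i} {r : ℝ} (hr : 0 < r) {x : H}
    (hlow : r * ‖x‖ ^ 2 ≤ ∑' i, ‖T i x‖ ^ 2) : Summable fun i => ‖T i x‖ ^ 2 := by
  by_contra h
  rw [tsum_eq_zero_of_not_summable h] at hlow
  have hx : x = 0 := norm_eq_zero.mp ((sq_nonpos_iff _).mp (nonpos_of_mul_nonpos_right hlow hr))
  exact h (by simp [hx, summable_zero])

variable [CompleteSpace H] [∀ i, CompleteSpace (G i)]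

def HasSynthesisBound (T : ∀ i, H →L[𝕜] G i) (C : ℝ) : Prop :=
  ∀ (F : Finset ι) (y : ∀ i, G i), ‖∑ i ∈ F, adjoint (T i) (y i)‖ ≤ C * √(∑ i ∈ F, ‖y i‖ ^ 2)

theorem inner_sum_adjoint_apply (T : ∀ i, H →L[𝕜] G i) (F : Finset ι) (x : H) (y : ∀ i, G i) :
    ⟪x, ∑ i ∈ F, adjoint (T i) (y i)⟫_𝕜 = ∑ i ∈ F, ⟪T i x, y i⟫_𝕜 := by
  simp only [inner_sum, adjoint_inner_right]

theorem re_inner_sum_adjoint_apply_le (T : ∀ i, H →L[𝕜] G i) (F : Finset ι) (x : H)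
    (y : ∀ i, G i) :
    re ⟪x, ∑ i ∈ F, adjoint (T i) (y i)⟫_𝕜 ≤ √(∑ i ∈ F, ‖T i x‖ ^ 2) * √(∑ i ∈ F, ‖y i‖ ^ 2) :=
  calc re ⟪x, ∑ i ∈ F, adjoint (T i) (y i)⟫_𝕜 = ∑ i ∈ F, re ⟪T i x, y i⟫_𝕜 := by
        rw [inner_sum_adjoint_apply, map_sum]
    _ ≤ ∑ i ∈ F, ‖T i x‖ * ‖y i‖ := sum_le_sum fun i _ => re_inner_le_norm _ _
    _ ≤ _ := Real.sum_mul_le_sqrt_mul_sqrt F _ _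

theorem sum_norm_sq_eq_re_inner_sum_adjoint_apply (T : ∀ i, H →L[𝕜] G i) (F : Finset ι)
    (x : H) : ∑ i ∈ F, ‖T i x‖ ^ 2 = re ⟪x, ∑ i ∈ F, adjoint (T i) (T i x)⟫_𝕜 := by
  simp only [inner_sum_adjoint_apply, map_sum, inner_self_eq_norm_sq]

theorem HasBesselBound.hasSynthesisBound {T : ∀ i, H →L[𝕜] G i} {B : ℝ}
    (hB : HasBesselBound T B) : HasSynthesisBound T √B := by
  intro F y
  set u := ∑ i ∈ F, adjoint (T i) (y i)
  have hTu : √(∑ i ∈ F, ‖T i u‖ ^ 2) ≤ √B * ‖u‖ := by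
    rw [← Real.sqrt_sq (norm_nonneg u), ← Real.sqrt_mul' _ (sq_nonneg _)]
    exact Real.sqrt_le_sqrt (hB u F)
  have hu : ‖u‖ ^ 2 ≤ √B * √(∑ i ∈ F, ‖y i‖ ^ 2) * ‖u‖ :=
    calc ‖u‖ ^ 2 = re ⟪u, u⟫_𝕜 := (inner_self_eq_norm_sq u).symm
      _ ≤ √(∑ i ∈ F, ‖T i u‖ ^ 2) * √(∑ i ∈ F, ‖y i‖ ^ 2) :=
        re_inner_sum_adjoint_apply_le T F u y
      _ ≤ √B * ‖u‖ * √(∑ i ∈ F, ‖y i‖ ^ 2) := by gcongr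
      _ = √B * √(∑ i ∈ F, ‖y i‖ ^ 2) * ‖u‖ := by ring
  have : 0 ≤ √B * √(∑ i ∈ F, ‖y i‖ ^ 2) := by positivity
  nlinarith [norm_nonneg u]

theorem HasSynthesisBound.hasBesselBound {T : ∀ i, H →L[𝕜] G i} {C : ℝ}
    (hC : HasSynthesisBound T C) : HasBesselBound T (C ^ 2) := by
  intro x F
  set a := √(∑ i ∈ F, ‖T i x‖ ^ 2)
  have ha : a ^ 2 = ∑ i ∈ F, ‖T i x‖ ^ 2 := Real.sq_sqrt (sum_nonneg fun _ _ => sq_nonneg _)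
  have h : a ^ 2 ≤ C * ‖x‖ * a :=
    calc a ^ 2 = re ⟪x, ∑ i ∈ F, adjoint (T i) (T i x)⟫_𝕜 := by
          rw [ha, sum_norm_sq_eq_re_inner_sum_adjoint_apply]
      _ ≤ ‖x‖ * ‖∑ i ∈ F, adjoint (T i) (T i x)‖ := re_inner_le_norm _ _
      _ ≤ ‖x‖ * (C * a) := by gcongr; exact hC F _
      _ = C * ‖x‖ * a := by ring
  nlinarith [sq_nonneg (C * ‖x‖ - a), Real.sqrt_nonneg (∑ i ∈ F, ‖T i x‖ ^ 2)]

theorem HasSynthesisBound.of_perturbation {T R : ∀ i, H →L[𝕜] G i} {C l μ : ℝ}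
    (hC : HasSynthesisBound T C) (hl : 0 ≤ 1 + l)
    (hpert : ∀ (F : Finset ι) (y : ∀ i, G i),
      ‖∑ i ∈ F, (adjoint (T i) (y i) - adjoint (R i) (y i))‖ ≤
        l * ‖∑ i ∈ F, adjoint (T i) (y i)‖ + μ * √(∑ i ∈ F, ‖y i‖ ^ 2)) :
    HasSynthesisBound R ((1 + l) * C + μ) := fun F y =>
  calc ‖∑ i ∈ F, adjoint (R i) (y i)‖
      = ‖∑ i ∈ F, adjoint (T i) (y i) - ∑ i ∈ F, (adjoint (T i) (y i) - adjoint (R i) (y i))‖ := by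
        rw [sum_sub_distrib, sub_sub_cancel]
    _ ≤ ‖∑ i ∈ F, adjoint (T i) (y i)‖ +
        ‖∑ i ∈ F, (adjoint (T i) (y i) - adjoint (R i) (y i))‖ := norm_sub_le _ _
    _ ≤ (1 + l) * ‖∑ i ∈ F, adjoint (T i) (y i)‖ + μ * √(∑ i ∈ F, ‖y i‖ ^ 2) := by
        linarith [hpert F y]
    _ ≤ (1 + l) * (C * √(∑ i ∈ F, ‖y i‖ ^ 2)) + μ * √(∑ i ∈ F, ‖y i‖ ^ 2) := by
        gcongr; exact hC F y
    _ = ((1 + l) * C + μ) * √(∑ i ∈ F, ‖y i‖ ^ 2) := by ring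

theorem HasBesselBound.summable_adjoint_apply {T : ∀ i, H →L[𝕜] G i} {B : ℝ}
    (hB : HasBesselBound T B) {y : ∀ i, G i}
    (hy : Summable fun i => ‖y i‖ ^ 2) : Summable fun i => adjoint (T i) (y i) := by
  rw [summable_iff_vanishing_norm]
  intro ε hε
  have hδ : 0 < (ε / (√B + 1)) ^ 2 := by positivity
  obtain ⟨s, hs⟩ := summable_iff_vanishing_norm.mp hy _ hδ
  refine ⟨s, fun t ht => ?_⟩
  have htail : √(∑ i ∈ t, ‖y i‖ ^ 2) < ε / (√B + 1) := by
    rw [Real.sqrt_lt' (by positivity)]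
    exact (le_abs_self _).trans_lt (hs t ht)
  calc ‖∑ i ∈ t, adjoint (T i) (y i)‖ ≤ √B * √(∑ i ∈ t, ‖y i‖ ^ 2) :=
        hB.hasSynthesisBound t y
    _ ≤ (√B + 1) * √(∑ i ∈ t, ‖y i‖ ^ 2) := by gcongr; linarith
    _ < (√B + 1) * (ε / (√B + 1)) := by gcongr
    _ = ε := by field_simp

-- The frame operator `∑ i, (T i)† ∘L T i`; the series converges strongly, not in operator norm.
theorem HasBesselBound.exists_hasSum_adjoint_apply_self {T : ∀ i, H →L[𝕜] G i} {B : ℝ}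
    (hB : HasBesselBound T B) :
    ∃ S : H →L[𝕜] H, ∀ x, HasSum (fun i => adjoint (T i) (T i x)) (S x) := by
  have hsum (x : H) : Summable fun i => adjoint (T i) (T i x) :=
    hB.summable_adjoint_apply (summable_of_sum_le (fun _ => sq_nonneg _) (hB x))
  have hlim : Tendsto (fun F x => ∑ i ∈ F, adjoint (T i) (T i x)) atTop
      (𝓝 fun x => ∑' i, adjoint (T i) (T i x)) :=
    tendsto_pi_nhds.mpr fun x => (hsum x).hasSum
  let S : H →ₗ[𝕜] H := linearMapOfTendsto _
    (fun F => ∑ i ∈ F, ((adjoint (T i)).comp (T i) : H →ₗ[𝕜] H)) (by simpa using hlim)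
  refine ⟨S.mkContinuous (√B * √B) fun x => ?_, fun x => (hsum x).hasSum⟩
  refine le_of_tendsto' (hsum x).hasSum.norm fun F => ?_
  calc ‖∑ i ∈ F, adjoint (T i) (T i x)‖ ≤ √B * √(∑ i ∈ F, ‖T i x‖ ^ 2) :=
        hB.hasSynthesisBound F _
    _ ≤ √B * √(B * ‖x‖ ^ 2) := by gcongr; exact hB x F
    _ = √B * √B * ‖x‖ := by
        rw [Real.sqrt_mul' _ (sq_nonneg _), Real.sqrt_sq (norm_nonneg x), mul_assoc]

theorem hasSum_norm_sq_of_hasSum_adjoint_apply_self {T : ∀ i, H →L[𝕜] G i} {z w : H}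
    (h : HasSum (fun i => adjoint (T i) (T i z)) w) :
    HasSum (fun i => ‖T i z‖ ^ 2) (re ⟪z, w⟫_𝕜) := by
  have := reCLM.hasSum ((innerSL 𝕜 z).hasSum h)
  simpa [adjoint_inner_right, inner_self_eq_norm_sq] using this

theorem exists_hasSum_adjoint_apply_eq_of_frame {T : ∀ i, H →L[𝕜] G i} {r B : ℝ} (hr : 0 < r)
    (hlow : ∀ x : H, r * ‖x‖ ^ 2 ≤ ∑' i, ‖T i x‖ ^ 2)
    (hB : HasBesselBound T B) (x : H) :
    ∃ y : ∀ i, G i, HasSum (fun i => adjoint (T i) (y i)) x ∧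
      ∀ F : Finset ι, r * ∑ i ∈ F, ‖y i‖ ^ 2 ≤ ‖x‖ ^ 2 := by
  obtain ⟨S, hS⟩ := hB.exists_hasSum_adjoint_apply_self
  have hquad (z : H) := hasSum_norm_sq_of_hasSum_adjoint_apply_self (hS z)
  have hcoer (z : H) : r * ‖z‖ ^ 2 ≤ re ⟪z, S z⟫_𝕜 := (hlow z).trans_eq (hquad z).tsum_eq
  obtain ⟨z, rfl⟩ := S.surjective_of_coercive hr hcoer x
  refine ⟨fun i => T i z, hS z, fun F => ?_⟩
  set s := re ⟪z, S z⟫_𝕜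
  have hFs : ∑ i ∈ F, ‖T i z‖ ^ 2 ≤ s := sum_le_hasSum F (fun _ _ => sq_nonneg _) (hquad z)
  have hzs : r * ‖z‖ ^ 2 ≤ s := hcoer z
  have hsz : s ≤ ‖z‖ * ‖S z‖ := re_inner_le_norm _ _
  have hrs : r * s ≤ ‖S z‖ ^ 2 := by
    nlinarith [norm_nonneg z, norm_nonneg (S z), sq_nonneg (r * ‖z‖ - ‖S z‖)]
  nlinarith

theorem norm_sq_le_of_hasSum_adjoint_apply_of_perturbation {T R : ∀ i, H →L[𝕜] G i}
    {l μ s a : ℝ} (hμ : 0 ≤ μ)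
    (hpert : ∀ (F : Finset ι) (y : ∀ i, G i),
      ‖∑ i ∈ F, (adjoint (T i) (y i) - adjoint (R i) (y i))‖ ≤
        l * ‖∑ i ∈ F, adjoint (T i) (y i)‖ + μ * √(∑ i ∈ F, ‖y i‖ ^ 2))
    {x : H} {y : ∀ i, G i} (hy : HasSum (fun i => adjoint (T i) (y i)) x)
    (hys : ∀ F : Finset ι, ∑ i ∈ F, ‖y i‖ ^ 2 ≤ s)
    (hRx : ∀ F : Finset ι, ∑ i ∈ F, ‖R i x‖ ^ 2 ≤ a) :
    ‖x‖ ^ 2 ≤ l * ‖x‖ ^ 2 + μ * √s * ‖x‖ + √a * √s := by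
  have hpartial (F : Finset ι) : re ⟪x, ∑ i ∈ F, adjoint (T i) (y i)⟫_𝕜 ≤
      √a * √s + ‖x‖ * (l * ‖∑ i ∈ F, adjoint (T i) (y i)‖ + μ * √s) := by
    have hsplit : re ⟪x, ∑ i ∈ F, adjoint (T i) (y i)⟫_𝕜 = re ⟪x, ∑ i ∈ F, adjoint (R i) (y i)⟫_𝕜 +
        re ⟪x, ∑ i ∈ F, (adjoint (T i) (y i) - adjoint (R i) (y i))⟫_𝕜 := by
      rw [← map_add, ← inner_add_right, sum_sub_distrib, add_sub_cancel]
    have hR : re ⟪x, ∑ i ∈ F, adjoint (R i) (y i)⟫_𝕜 ≤ √a * √s :=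
      (re_inner_sum_adjoint_apply_le R F x y).trans <| by gcongr <;> simp only [hRx, hys]
    have hdiff : re ⟪x, ∑ i ∈ F, (adjoint (T i) (y i) - adjoint (R i) (y i))⟫_𝕜 ≤
        ‖x‖ * (l * ‖∑ i ∈ F, adjoint (T i) (y i)‖ + μ * √s) :=
      (re_inner_le_norm _ _).trans <| by gcongr; exact (hpert F y).trans (by gcongr; exact hys F)
    linarith
  have hclosed : IsClosed {u : H | re ⟪x, u⟫_𝕜 ≤ √a * √s + ‖x‖ * (l * ‖u‖ + μ * √s)} :=
    isClosed_le (by fun_prop) (by fun_prop)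
  have hx : re ⟪x, x⟫_𝕜 ≤ √a * √s + ‖x‖ * (l * ‖x‖ + μ * √s) :=
    hclosed.mem_of_tendsto hy (Eventually.of_forall hpartial)
  rw [inner_self_eq_norm_sq] at hx
  linarith

theorem lower_frame_bound_of_perturbation {T R : ∀ i, H →L[𝕜] G i} {r B l μ a : ℝ} (hr : 0 < r)
    (hlow : ∀ x : H, r * ‖x‖ ^ 2 ≤ ∑' i, ‖T i x‖ ^ 2)
    (hB : HasBesselBound T B)
    (hμ : 0 ≤ μ) (hsmall : l + μ / √r ≤ 1)
    (hpert : ∀ (F : Finset ι) (y : ∀ i, G i),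
      ‖∑ i ∈ F, (adjoint (T i) (y i) - adjoint (R i) (y i))‖ ≤
        l * ‖∑ i ∈ F, adjoint (T i) (y i)‖ + μ * √(∑ i ∈ F, ‖y i‖ ^ 2))
    {x : H} (hRx : ∀ F : Finset ι, ∑ i ∈ F, ‖R i x‖ ^ 2 ≤ a) :
    r * (1 - (l + μ / √r)) ^ 2 * ‖x‖ ^ 2 ≤ a := by
  obtain ⟨y, hy, hyr⟩ := exists_hasSum_adjoint_apply_eq_of_frame hr hlow hB x
  have hys (F : Finset ι) : ∑ i ∈ F, ‖y i‖ ^ 2 ≤ ‖x‖ ^ 2 / r := by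
    rw [le_div_iff₀ hr, mul_comm]; exact hyr F
  have hmain := norm_sq_le_of_hasSum_adjoint_apply_of_perturbation hμ hpert hy hys hRx
  have ha : 0 ≤ a := by simpa using hRx ∅
  rw [Real.sqrt_div' _ hr.le, Real.sqrt_sq (norm_nonneg x)] at hmain
  set k := 1 - (l + μ / √r) with hk_def
  have hk : 0 ≤ k := sub_nonneg.mpr hsmall
  have hlin : √r * k * ‖x‖ ≤ √a := by
    rcases (norm_nonneg x).eq_or_lt with hx | hx
    · rw [← hx, mul_zero]; exact Real.sqrt_nonneg a
    · have : √r * k * ‖x‖ ^ 2 ≤ √a * ‖x‖ := by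
        have e : √r * k * ‖x‖ ^ 2 = √r * (‖x‖ ^ 2 - l * ‖x‖ ^ 2 - μ * (‖x‖ / √r) * ‖x‖) := by
          rw [hk_def]; field_simp; ring
        rw [e]
        calc √r * (‖x‖ ^ 2 - l * ‖x‖ ^ 2 - μ * (‖x‖ / √r) * ‖x‖)
            ≤ √r * (√a * (‖x‖ / √r)) := by gcongr; linarith
          _ = √a * ‖x‖ := by field_simp
      nlinarith
  calc r * k ^ 2 * ‖x‖ ^ 2 = (√r * k * ‖x‖) ^ 2 := by rw [mul_pow, mul_pow, Real.sq_sqrt hr.le]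
    _ ≤ √a ^ 2 := by gcongr
    _ = a := Real.sq_sqrt ha

end

/-- Stability of frames of operators in terms of the adjoint (synthesis) operators: if
`‖Σᵢ (Tᵢ† - Rᵢ†)(xᵢ)‖ ≤ λ‖Σᵢ Tᵢ†(xᵢ)‖ + μ(Σᵢ ‖xᵢ‖²)^{1/2}` for every finitely supported
family `(xᵢ)`, then `(Rᵢ)` is a frame of operators with the indicated bounds. -/
theorem stability_of_frame_of_operators_adjoint
    {H : Type*} [NormedAddCommGroup H] [InnerProductSpace ℂ H] [CompleteSpace H]
    (G : ℕ → Type*) [∀ i, NormedAddCommGroup (G i)] [∀ i, InnerProductSpace ℂ (G i)]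
    [∀ i, CompleteSpace (G i)]
    (T R : ∀ i, H →L[ℂ] G i)
    (r₁ r₂ : ℝ) (hr₁ : 0 < r₁) (hr₁₂ : r₁ ≤ r₂)
    (hframe : ∀ x : H,
        r₁ * ‖x‖ ^ 2 ≤ ∑' i, ‖T i x‖ ^ 2 ∧ ∑' i, ‖T i x‖ ^ 2 ≤ r₂ * ‖x‖ ^ 2)
    (l μ : ℝ) (hl : 0 ≤ l) (hμ : 0 ≤ μ) (hsmall : l + μ / Real.sqrt r₁ < 1)
    (hpert : ∀ (F : Finset ℕ) (x : ∀ i, G i),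
        ‖∑ i ∈ F,
            (ContinuousLinearMap.adjoint (T i) (x i) -
              ContinuousLinearMap.adjoint (R i) (x i))‖ ≤
          l * ‖∑ i ∈ F, ContinuousLinearMap.adjoint (T i) (x i)‖ +
            μ * Real.sqrt (∑ i ∈ F, ‖x i‖ ^ 2)) :
    ∀ x : H,
      r₁ * (1 - (l + μ / Real.sqrt r₁)) ^ 2 * ‖x‖ ^ 2 ≤ ∑' i, ‖R i x‖ ^ 2 ∧
        ∑' i, ‖R i x‖ ^ 2 ≤ r₂ * (1 + (l + μ / Real.sqrt r₂)) ^ 2 * ‖x‖ ^ 2 := by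
  have hr₂ : 0 < r₂ := hr₁.trans_le hr₁₂
  have hT : HasBesselBound T r₂ := fun x F =>
    (Summable.sum_le_tsum F (fun _ _ => sq_nonneg _)
      (summable_norm_sq_of_lower_bound hr₁ (hframe x).1)).trans (hframe x).2
  have hR (x : H) (F : Finset ℕ) :
      ∑ i ∈ F, ‖R i x‖ ^ 2 ≤ r₂ * (1 + (l + μ / √r₂)) ^ 2 * ‖x‖ ^ 2 := by
    have hC : (1 + l) * √r₂ + μ = √r₂ * (1 + (l + μ / √r₂)) := by
      field_simp; ring
    have := (hT.hasSynthesisBound.of_perturbation (by linarith) hpert).hasBesselBound x F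
    rwa [hC, mul_pow, Real.sq_sqrt hr₂.le] at this
  intro x
  have hsumR := summable_of_sum_le (fun _ => sq_nonneg _) (hR x)
  exact ⟨lower_frame_bound_of_perturbation hr₁ (fun x => (hframe x).1) hT hμ hsmall.le hpert
      fun F => Summable.sum_le_tsum F (fun _ _ => sq_nonneg _) hsumR,
    tsum_le_of_sum_le' (by positivity) (hR x)⟩
end

section
/- Let H be a complex Hilbert space, (Hᵢ)_{i∈ℕ} a sequence of complex Hilbert spaces, (Tᵢ : H → Hᵢ)_{i∈ℕ} a frame of operators for H with bounds r₁, r₂ and invertible frame operator S, and for each i let (e_{i,k})_{k∈ℕ} be a Hilbert (orthonormal) basis of Hᵢ. Put x_{i,k} := Tᵢ†(e_{i,k}) and y_{i,k} := (Tᵢ ∘ S⁻¹)†(e_{i,k}) = S⁻¹(x_{i,k}). Then the induced sequences form a pair of dual frames for H: for every x ∈ H, x = Σ_{i,k∈ℕ} ⟨x_{i,k}, x⟩ y_{i,k}, the series converging in H. -/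
/-!
The vectors `x_{i,k} = Tᵢ† e_{i,k}` form a Bessel sequence with bound `‖S‖`: by Parseval in each
`Hᵢ`, `Σ_{i,k} |⟪x_{i,k}, y⟫|² = Σᵢ ‖Tᵢ y‖² = re ⟪y, S y⟫ ≤ ‖S‖ ‖y‖²`. A Bessel sequence can be
synthesized from square-summable coefficients, so `Σ_{i,k} ⟪x_{i,k}, x⟫ x_{i,k}` converges
unconditionally; summing over `k` first expands `Tᵢ x` in the basis `(e_{i,k})`, so the sum is
`Σᵢ Tᵢ† Tᵢ x = S x`. Applying `S⁻¹` gives the reconstruction formula.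
-/

open scoped InnerProductSpace ComplexInnerProductSpace

section Bessel

variable {𝕜 E ι : Type*} [RCLike 𝕜] [NormedAddCommGroup E] [InnerProductSpace 𝕜 E]

variable (𝕜) in
/-- Bessel's condition on finite partial sums, so that no summability has to be assumed. -/
def IsBesselSequence (v : ι → E) (B : ℝ) : Prop :=
  ∀ (s : Finset ι) (y : E), ∑ p ∈ s, ‖⟪v p, y⟫_𝕜‖ ^ 2 ≤ B * ‖y‖ ^ 2

theorem IsBesselSequence.norm_sum_smul_sq_le {v : ι → E} {B : ℝ} (hv : IsBesselSequence 𝕜 v B)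
    (hB : 0 ≤ B) (c : ι → 𝕜) (s : Finset ι) :
    ‖∑ p ∈ s, c p • v p‖ ^ 2 ≤ B * ∑ p ∈ s, ‖c p‖ ^ 2 := by
  set z := ∑ p ∈ s, c p • v p
  have hz : ‖z‖ ^ 2 ≤ ∑ p ∈ s, ‖c p‖ * ‖⟪v p, z⟫_𝕜‖ :=
    calc ‖z‖ ^ 2 = RCLike.re ⟪z, z⟫_𝕜 := (inner_self_eq_norm_sq z).symm
      _ ≤ ‖∑ p ∈ s, ⟪c p • v p, z⟫_𝕜‖ := by rw [← sum_inner]; exact RCLike.re_le_norm _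
      _ ≤ ∑ p ∈ s, ‖c p‖ * ‖⟪v p, z⟫_𝕜‖ := by
        refine (norm_sum_le _ _).trans_eq (Finset.sum_congr rfl fun p _ => ?_)
        rw [inner_smul_left, norm_mul, RCLike.norm_conj]
  have hc : 0 ≤ ∑ p ∈ s, ‖c p‖ ^ 2 := by positivity
  have hz4 : (‖z‖ ^ 2) ^ 2 ≤ (∑ p ∈ s, ‖c p‖ ^ 2) * (B * ‖z‖ ^ 2) :=
    calc (‖z‖ ^ 2) ^ 2 ≤ (∑ p ∈ s, ‖c p‖ * ‖⟪v p, z⟫_𝕜‖) ^ 2 := by gcongr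
      _ ≤ (∑ p ∈ s, ‖c p‖ ^ 2) * ∑ p ∈ s, ‖⟪v p, z⟫_𝕜‖ ^ 2 :=
        Finset.sum_mul_sq_le_sq_mul_sq _ _ _
      _ ≤ (∑ p ∈ s, ‖c p‖ ^ 2) * (B * ‖z‖ ^ 2) := by gcongr; exact hv s z
  nlinarith [mul_nonneg hB hc]

theorem IsBesselSequence.summable_smul [CompleteSpace E] {v : ι → E} {B : ℝ}
    (hv : IsBesselSequence 𝕜 v B) (hB : 0 ≤ B) {c : ι → 𝕜}
    (hc : Summable fun p => ‖c p‖ ^ 2) : Summable fun p => c p • v p := by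
  rw [summable_iff_vanishing_norm] at hc ⊢
  intro ε hε
  obtain ⟨s, hs⟩ := hc (ε ^ 2 / (B + 1)) (by positivity)
  refine ⟨s, fun t ht => ?_⟩
  have hsmall : ∑ p ∈ t, ‖c p‖ ^ 2 < ε ^ 2 / (B + 1) := (le_abs_self _).trans_lt (hs t ht)
  have hsq : ‖∑ p ∈ t, c p • v p‖ ^ 2 < ε ^ 2 :=
    calc ‖∑ p ∈ t, c p • v p‖ ^ 2 ≤ B * ∑ p ∈ t, ‖c p‖ ^ 2 := hv.norm_sum_smul_sq_le hB c t
      _ ≤ (B + 1) * ∑ p ∈ t, ‖c p‖ ^ 2 := by gcongr; linarith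
      _ < (B + 1) * (ε ^ 2 / (B + 1)) := by gcongr
      _ = ε ^ 2 := by field_simp
  exact lt_of_pow_lt_pow_left₀ 2 hε.le hsq

end Bessel

theorem HilbertBasis.hasSum_norm_inner_sq {𝕜 E ι : Type*} [RCLike 𝕜] [NormedAddCommGroup E]
    [InnerProductSpace 𝕜 E] (b : HilbertBasis ι 𝕜 E) (x : E) :
    HasSum (fun i => ‖⟪b i, x⟫_𝕜‖ ^ 2) (‖x‖ ^ 2) := by
  have h := lp.hasSum_norm (p := 2) (by norm_num) (b.repr x)
  simp only [ENNReal.toReal_ofNat, Real.rpow_ofNat, LinearIsometryEquiv.norm_map,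
    b.repr_apply_apply] at h
  exact h

theorem hasSum_prod_of_nonneg {α β : Type*} {f : α × β → ℝ} {g : α → ℝ} {a : ℝ} (hf : 0 ≤ f)
    (hfg : ∀ i, HasSum (fun k => f (i, k)) (g i)) (hg : HasSum g a) : HasSum f a := by
  have hsum : Summable f :=
    (summable_prod_of_nonneg hf).2 ⟨fun i => (hfg i).summable,
      hg.summable.congr fun i => ((hfg i).tsum_eq).symm⟩
  exact (hg.unique (hsum.hasSum.prod_fiberwise hfg)) ▸ hsum.hasSum

section FrameOfOperators

variable {𝕜 E ι κ : Type*} [RCLike 𝕜] [NormedAddCommGroup E] [InnerProductSpace 𝕜 E]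
  [CompleteSpace E] {G : ι → Type*} [∀ i, NormedAddCommGroup (G i)]
  [∀ i, InnerProductSpace 𝕜 (G i)] [∀ i, CompleteSpace (G i)]

theorem hasSum_norm_sq_of_hasSum_adjoint_apply {T : ∀ i, E →L[𝕜] G i} {S : E →L[𝕜] E}
    {x : E} (hS : HasSum (fun i => ContinuousLinearMap.adjoint (T i) (T i x)) (S x)) :
    HasSum (fun i => ‖T i x‖ ^ 2) (RCLike.re ⟪x, S x⟫_𝕜) := by
  have h := RCLike.hasSum_re 𝕜 ((innerSL 𝕜 x).hasSum hS)
  simp only [innerSL_apply_apply, ContinuousLinearMap.adjoint_inner_right,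
    inner_self_eq_norm_sq] at h
  exact h

noncomputable def inducedSequence (T : ∀ i, E →L[𝕜] G i) (e : ∀ i, HilbertBasis κ 𝕜 (G i)) :
    ι × κ → E :=
  fun p => ContinuousLinearMap.adjoint (T p.1) (e p.1 p.2)

variable {T : ∀ i, E →L[𝕜] G i} (e : ∀ i, HilbertBasis κ 𝕜 (G i))

theorem inner_inducedSequence (p : ι × κ) (y : E) :
    ⟪inducedSequence T e p, y⟫_𝕜 = ⟪e p.1 p.2, T p.1 y⟫_𝕜 :=
  ContinuousLinearMap.adjoint_inner_left _ _ _

theorem hasSum_norm_inner_inducedSequence_sq {y : E} {a : ℝ}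
    (hy : HasSum (fun i => ‖T i y‖ ^ 2) a) :
    HasSum (fun p => ‖⟪inducedSequence T e p, y⟫_𝕜‖ ^ 2) a := by
  simp only [inner_inducedSequence]
  exact hasSum_prod_of_nonneg (fun p => sq_nonneg _)
    (fun i => (e i).hasSum_norm_inner_sq (T i y)) hy

theorem hasSum_inner_inducedSequence_smul_fiber (x : E) (i : ι) :
    HasSum (fun k => ⟪inducedSequence T e (i, k), x⟫_𝕜 • inducedSequence T e (i, k))
      (ContinuousLinearMap.adjoint (T i) (T i x)) := by
  refine ((ContinuousLinearMap.adjoint (T i)).hasSum ((e i).hasSum_repr (T i x))).congr_fun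
    fun k => ?_
  rw [map_smul, HilbertBasis.repr_apply_apply, inner_inducedSequence]
  rfl

variable {S : E →L[𝕜] E}
  (hS : ∀ x, HasSum (fun i => ContinuousLinearMap.adjoint (T i) (T i x)) (S x))
include hS

theorem isBesselSequence_inducedSequence : IsBesselSequence 𝕜 (inducedSequence T e) ‖S‖ :=
  fun s y =>
    calc ∑ p ∈ s, ‖⟪inducedSequence T e p, y⟫_𝕜‖ ^ 2 ≤ RCLike.re ⟪y, S y⟫_𝕜 :=
          sum_le_hasSum s (fun p _ => sq_nonneg _) <|
            hasSum_norm_inner_inducedSequence_sq e (hasSum_norm_sq_of_hasSum_adjoint_apply (hS y))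
      _ ≤ ‖y‖ * ‖S y‖ := (RCLike.re_le_norm _).trans (norm_inner_le_norm _ _)
      _ ≤ ‖S‖ * ‖y‖ ^ 2 := by nlinarith [S.le_opNorm y, norm_nonneg y]

theorem hasSum_inner_inducedSequence_smul (x : E) :
    HasSum (fun p => ⟪inducedSequence T e p, x⟫_𝕜 • inducedSequence T e p) (S x) := by
  have hcoeff : Summable fun p => ‖⟪inducedSequence T e p, x⟫_𝕜‖ ^ 2 :=
    (hasSum_norm_inner_inducedSequence_sq e
      (hasSum_norm_sq_of_hasSum_adjoint_apply (hS x))).summable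
  have hsum : Summable fun p => ⟪inducedSequence T e p, x⟫_𝕜 • inducedSequence T e p :=
    (isBesselSequence_inducedSequence e hS).summable_smul (norm_nonneg S) hcoeff
  exact ((hS x).unique (hsum.hasSum.prod_fiberwise
    (hasSum_inner_inducedSequence_smul_fiber e x))) ▸ hsum.hasSum

end FrameOfOperators

theorem induced_sequences_dual_frames_general
    {H : Type*} [NormedAddCommGroup H] [InnerProductSpace ℂ H] [CompleteSpace H]
    (G : ℕ → Type*) [∀ i, NormedAddCommGroup (G i)] [∀ i, InnerProductSpace ℂ (G i)]
    [∀ i, CompleteSpace (G i)]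
    (T : ∀ i, H →L[ℂ] G i) (e : ∀ i, HilbertBasis ℕ ℂ (G i))
    (S Sinv : H →L[ℂ] H)
    (hS : ∀ x : H, HasSum (fun i => ContinuousLinearMap.adjoint (T i) (T i x)) (S x))
    (hSinv₂ : Sinv.comp S = 1) :
    ∀ x : H,
      HasSum
        (fun p : ℕ × ℕ =>
          ⟪ContinuousLinearMap.adjoint (T p.1) (e p.1 p.2), x⟫ •
            Sinv (ContinuousLinearMap.adjoint (T p.1) (e p.1 p.2)))
        x := by
  intro x
  have h := Sinv.hasSum (hasSum_inner_inducedSequence_smul e hS x)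
  have hx : Sinv (S x) = x := DFunLike.congr_fun hSinv₂ x
  rw [hx] at h
  simp only [map_smul] at h
  exact h

/-- The sequences induced by a pair of dual frames of operators `(Tᵢ)` and `(Uᵢ = Tᵢ ∘ S⁻¹)`
form a pair of dual frames: `x = Σ_{i,k} ⟨x_{i,k}, x⟩ y_{i,k}` where `x_{i,k} = Tᵢ†(e_{i,k})`
and `y_{i,k} = S⁻¹(x_{i,k})`. -/
theorem induced_sequences_dual_frames
    {H : Type*} [NormedAddCommGroup H] [InnerProductSpace ℂ H] [CompleteSpace H]
    (G : ℕ → Type*) [∀ i, NormedAddCommGroup (G i)] [∀ i, InnerProductSpace ℂ (G i)]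
    [∀ i, CompleteSpace (G i)]
    (T : ∀ i, H →L[ℂ] G i) (e : ∀ i, HilbertBasis ℕ ℂ (G i))
    (r₁ r₂ : ℝ) (hr₁ : 0 < r₁) (hr₁₂ : r₁ ≤ r₂)
    (hframe : ∀ x : H,
        r₁ * ‖x‖ ^ 2 ≤ ∑' i, ‖T i x‖ ^ 2 ∧ ∑' i, ‖T i x‖ ^ 2 ≤ r₂ * ‖x‖ ^ 2)
    (S Sinv : H →L[ℂ] H)
    (hS : ∀ x : H, HasSum (fun i => ContinuousLinearMap.adjoint (T i) (T i x)) (S x))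
    (hSinv₁ : S.comp Sinv = 1) (hSinv₂ : Sinv.comp S = 1) :
    ∀ x : H,
      HasSum
        (fun p : ℕ × ℕ =>
          ⟪ContinuousLinearMap.adjoint (T p.1) (e p.1 p.2), x⟫ •
            Sinv (ContinuousLinearMap.adjoint (T p.1) (e p.1 p.2)))
        x :=
  induced_sequences_dual_frames_general G T e S Sinv hS hSinv₂
end
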